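/- There exists a mean-payoff game Γ and a bound b ∈ ℕ such that Min has no positional strategy that is optimal with respect to the lower-weak-upper-bound problem, although Min has an optimal strategy with memory. Concretely: consider the game with vertices v₁, v₂, v₃, v₄ where v₃ belongs to Min and v₁, v₂, v₄ belong to Max, edges and weights such as in the example with b = 15 where from v₃ Min can move to v₁ or v₄, and neither of the two positional strategies of Min forces Max to lose from v₃ (i.e., under each positional Min strategy Max has finite minimal sufficient energy at v₃), yet a Min strategy that first moves from v₃ to v₄ and, upon return to v₃, moves to v₁ forces a path segment of weight −20 < −b, making lwub_b(v₃) = ∞. -/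

import Mathlib

/-!
Vertex `2` (the paper's `v₃`) belongs to Min and leads to the two-cycles `2 → 0 → 2` (weights
`-10, +10`) and `2 → 3 → 2` (weights `+10, -10`); Max never has a choice. Against a positional
strategy the play repeats one of these cycles forever, so its prefix sums stay within `10` of
`0` and no segment weighs less than `-10 ≥ -15`. Using memory, Min goes through `3` first and
then to `0`, and the segment `3 → 2 → 0` weighs `-20 < -15`.
-/

/-- Max has a (history-dependent) strategy ensuring that every infinite play
from `v` consistent with it keeps `x` plus all prefix sums non-negative and
contains no segment of weight below `-b` (lower-weak-upper-bound problem).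
Quantifying over all plays consistent with Max's strategy captures `∀` over
Min's strategies. -/
def EnsLWUB {V : Type*} (E : V → V → Prop) (w : V → V → ℤ)
    (VMax : Set V) (b : ℕ) (v : V) (x : ℕ) : Prop :=
  ∃ σ : List V → V,
    (∀ (l : List V) (u : V), l.getLast? = some u → u ∈ VMax → E u (σ l)) ∧
    ∀ p : ℕ → V, p 0 = v → (∀ i, E (p i) (p (i + 1))) →
      (∀ i, p i ∈ VMax →
        p (i + 1) = σ (List.ofFn (fun j : Fin (i + 1) => p j))) →
      ((∀ n : ℕ, 0 ≤ (x : ℤ) + ∑ i ∈ Finset.range n, w (p i) (p (i + 1))) ∧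
        ∀ n₁ n₂ : ℕ, n₁ < n₂ →
          -(b : ℤ) ≤ ∑ i ∈ Finset.Ico n₁ n₂, w (p i) (p (i + 1)))

open Finset

section ForcedMax

variable {V : Type*} {E : V → V → Prop} {VMax : Set V}

lemma getLast?_ofFn_prefix (p : ℕ → V) (i : ℕ) :
    (List.ofFn fun j : Fin (i + 1) => p j).getLast? = some (p i) := by
  rw [List.getLast?_eq_some_getLast (by simp), List.getLast_ofFn]
  rfl

lemma consistent_of_forced (hforced : ∀ u ∈ VMax, ∀ u₁ u₂, E u u₁ → E u u₂ → u₁ = u₂)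
    {σ : List V → V} (hσ : ∀ l u, l.getLast? = some u → u ∈ VMax → E u (σ l))
    {p : ℕ → V} (hp : ∀ i, E (p i) (p (i + 1))) (i : ℕ) (hi : p i ∈ VMax) :
    p (i + 1) = σ (List.ofFn fun j : Fin (i + 1) => p j) :=
  hforced _ hi _ _ (hp i) (hσ _ _ (getLast?_ofFn_prefix p i) hi)

lemma not_ensLWUB_of_forced_of_sum_Ico_lt {w : V → V → ℤ} {b : ℕ} {v : V}
    (hforced : ∀ u ∈ VMax, ∀ u₁ u₂, E u u₁ → E u u₂ → u₁ = u₂)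
    {p : ℕ → V} (hp0 : p 0 = v) (hp : ∀ i, E (p i) (p (i + 1)))
    {n₁ n₂ : ℕ} (hn : n₁ < n₂) (hseg : ∑ i ∈ Ico n₁ n₂, w (p i) (p (i + 1)) < -b) (x : ℕ) :
    ¬ EnsLWUB E w VMax b v x := by
  rintro ⟨σ, hσ, hwin⟩
  have := (hwin p hp0 hp (consistent_of_forced hforced hσ hp)).2 n₁ n₂ hn
  omega

end ForcedMax

section Alternate

variable {V : Type*}

def alternate (a c : V) (n : ℕ) : V := if Even n then a else c

@[simp] lemma alternate_zero (a c : V) : alternate a c 0 = a := by simp [alternate]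

@[simp] lemma alternate_succ (a c : V) (n : ℕ) : alternate a c (n + 1) = alternate c a n := by
  by_cases h : Even n <;> simp [alternate, Nat.even_add_one, h]

lemma alternate_edge {E : V → V → Prop} {a c : V} (hac : E a c) (hca : E c a) (n : ℕ) :
    E (alternate a c n) (alternate a c (n + 1)) := by
  induction n generalizing a c with
  | zero => simpa using hac
  | succ n ih => simpa using ih hca hac

variable {a c : V} {w : V → V → ℤ}

lemma alternate_consistent {VMax : Set V} {π : V → V} (hπ : π a = c) (hc : c ∈ VMax) (n : ℕ)
    (hn : alternate a c n ∉ VMax) : alternate a c (n + 1) = π (alternate a c n) := by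
  by_cases h : Even n
  · simp [alternate, Nat.even_add_one, h, hπ]
  · simp [alternate, h, hc] at hn

lemma sum_range_alternate (hw : w c a = -w a c) (n : ℕ) :
    ∑ i ∈ range n, w (alternate a c i) (alternate a c (i + 1)) = if Even n then 0 else w a c := by
  induction n with
  | zero => simp
  | succ n ih =>
    rw [sum_range_succ, ih]
    by_cases h : Even n <;> simp [alternate, Nat.even_add_one, h, hw]

lemma abs_sum_Ico_alternate_le (hw : w c a = -w a c) {n₁ n₂ : ℕ} (hn : n₁ ≤ n₂) :
    |∑ i ∈ Ico n₁ n₂, w (alternate a c i) (alternate a c (i + 1))| ≤ |w a c| := by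
  rw [sum_Ico_eq_sub _ hn, sum_range_alternate hw, sum_range_alternate hw]
  split_ifs <;> simp [abs_neg]

lemma abs_sum_range_alternate_le (hw : w c a = -w a c) (n : ℕ) :
    |∑ i ∈ range n, w (alternate a c i) (alternate a c (i + 1))| ≤ |w a c| := by
  rw [range_eq_Ico]
  exact abs_sum_Ico_alternate_le hw (Nat.zero_le n)

end Alternate

/-- Vertex `i` is the paper's `v_{i+1}`; vertex `1` only carries a self-loop. -/
def gameEdge (u u' : Fin 4) : Prop :=
  (u, u') ∈ ({(2, 0), (0, 2), (2, 3), (3, 2), (1, 1)} : Finset (Fin 4 × Fin 4))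

instance : DecidableRel gameEdge := fun _ _ => inferInstanceAs (Decidable (_ ∈ _))

def gameWeight : Fin 4 → Fin 4 → ℤ
  | 2, 0 => -10
  | 0, 2 => 10
  | 2, 3 => 10
  | 3, 2 => -10
  | _, _ => 0

def gameMax : Set (Fin 4) := {2}ᶜ

lemma gameEdge_total : ∀ u, ∃ u', gameEdge u u' := by decide

lemma gameEdge_forced : ∀ u ∈ gameMax, ∀ u₁ u₂, gameEdge u u₁ → gameEdge u u₂ → u₁ = u₂ := by
  unfold gameMax; decide

def memoryPlay : ℕ → Fin 4
  | 0 => 2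
  | 1 => 3
  | n + 2 => alternate 2 0 n

lemma memoryPlay_edge (i : ℕ) : gameEdge (memoryPlay i) (memoryPlay (i + 1)) := by
  match i with
  | 0 => decide
  | 1 => decide
  | n + 2 => exact alternate_edge (by decide) (by decide) n

lemma not_ensLWUB_game (x : ℕ) : ¬ EnsLWUB gameEdge gameWeight gameMax 15 2 x :=
  not_ensLWUB_of_forced_of_sum_Ico_lt gameEdge_forced (p := memoryPlay) rfl memoryPlay_edge
    (n₁ := 1) (n₂ := 3) (by norm_num) (by decide) x

lemma gameEdge_two_iff {u : Fin 4} : gameEdge 2 u ↔ u = 0 ∨ u = 3 := by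
  revert u; decide

lemma exists_play_of_positional (π : Fin 4 → Fin 4) (hπ : ∀ u ∉ gameMax, gameEdge u (π u)) :
    ∃ (x : ℕ) (p : ℕ → Fin 4), p 0 = 2 ∧
      (∀ i, gameEdge (p i) (p (i + 1)) ∧ (p i ∉ gameMax → p (i + 1) = π (p i))) ∧
      (∀ n : ℕ, 0 ≤ (x : ℤ) + ∑ i ∈ range n, gameWeight (p i) (p (i + 1))) ∧
      (∀ n₁ n₂ : ℕ, n₁ < n₂ →
        -((15 : ℕ) : ℤ) ≤ ∑ i ∈ Ico n₁ n₂, gameWeight (p i) (p (i + 1))) := by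
  obtain ⟨hmax, hto, hback, hw, habs⟩ : π 2 ∈ gameMax ∧ gameEdge 2 (π 2) ∧ gameEdge (π 2) 2 ∧
      gameWeight (π 2) 2 = -gameWeight 2 (π 2) ∧ |gameWeight 2 (π 2)| = 10 := by
    unfold gameMax
    rcases gameEdge_two_iff.mp (hπ 2 (by simp [gameMax])) with h | h <;> rw [h] <;> decide
  refine ⟨10, alternate 2 (π 2), rfl,
    fun i => ⟨alternate_edge hto hback i, alternate_consistent rfl hmax i⟩,
    fun n => ?_, fun n₁ n₂ hn => ?_⟩
  · have := abs_le.mp ((abs_sum_range_alternate_le hw n).trans habs.le)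
    push_cast
    linarith [this.1]
  · have := abs_le.mp ((abs_sum_Ico_alternate_le hw hn.le).trans habs.le)
    push_cast
    linarith [this.1]

/-- there is a mean-payoff game (on four vertices) and a bound
`b` with a Min vertex `v` such that `lwub_b(v) = ∞` (no finite initial energy
suffices for Max), yet for every positional strategy `π` of Min, Max has a
finite sufficient initial energy at `v` against `π`; hence no positional
strategy of Min is optimal for the lower-weak-upper-bound problem, although
Min (with memory) can force Max to lose from `v`. -/
theorem stmt_18 :
    ∃ (E : Fin 4 → Fin 4 → Prop) (w : Fin 4 → Fin 4 → ℤ)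
      (VMax : Set (Fin 4)) (b : ℕ) (v : Fin 4),
      (∀ u : Fin 4, ∃ u', E u u') ∧ v ∉ VMax ∧
      (∀ x : ℕ, ¬ EnsLWUB E w VMax b v x) ∧
      (∀ π : Fin 4 → Fin 4, (∀ u ∉ VMax, E u (π u)) →
        ∃ (x : ℕ) (p : ℕ → Fin 4), p 0 = v ∧
          (∀ i, E (p i) (p (i + 1)) ∧ (p i ∉ VMax → p (i + 1) = π (p i))) ∧
          (∀ n : ℕ, 0 ≤ (x : ℤ) + ∑ i ∈ Finset.range n, w (p i) (p (i + 1))) ∧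
          (∀ n₁ n₂ : ℕ, n₁ < n₂ →
            -(b : ℤ) ≤ ∑ i ∈ Finset.Ico n₁ n₂, w (p i) (p (i + 1)))) :=
  ⟨gameEdge, gameWeight, gameMax, 15, 2, gameEdge_total, by simp [gameMax], not_ensLWUB_game,
    exists_play_of_positional⟩
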